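/- arXiv:1406.4931 — 2 statements merged into one kernel-verified Lean document; each statement's English description precedes it below -/
import Mathlib

section
/- For all r > 0, sinh³(r) > r³ cosh(r). -/
/-!
Write `f x = sinh x ^ 3 - x ^ 3 * cosh x`, so `f 0 = 0` and
`f' x = 3 cosh x (sinh x ^ 2 - x ^ 2) - x ^ 3 sinh x`.
The Taylor bound `sinh x ≥ x + x ^ 3 / 6` gives `sinh x ^ 2 - x ^ 2 ≥ x ^ 4 / 3`, hence
`f' x ≥ x ^ 3 (x cosh x - sinh x)`, which is positive because `tanh x < x`.
So `f` is strictly increasing on `[0, ∞)`.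
-/

open Set

namespace Real

lemma add_pow_three_div_six_le_sinh {x : ℝ} (hx : 0 ≤ x) : x + x ^ 3 / 6 ≤ sinh x := by
  have h := sum_le_hasSum (Finset.range 2) (fun n _ => by positivity) (hasSum_sinh x)
  norm_num [Finset.sum_range_succ, Nat.factorial] at h
  exact h

lemma sinh_lt_mul_cosh {x : ℝ} (hx : 0 < x) : sinh x < x * cosh x := by
  have hmono : StrictMonoOn (fun x => x * cosh x - sinh x) (Ici 0) := by
    refine strictMonoOn_of_hasDerivWithinAt_pos (f' := fun x => x * sinh x) (convex_Ici 0)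
      (by fun_prop) (fun y _ => ?_) (fun y hy => ?_)
    · exact ((((hasDerivAt_id' y).fun_mul (hasDerivAt_cosh y)).fun_sub
        (hasDerivAt_sinh y)).congr_deriv (by ring)).hasDerivWithinAt
    · rw [interior_Ici, mem_Ioi] at hy
      exact mul_pos hy (sinh_pos_iff.2 hy)
  simpa using hmono self_mem_Ici hx.le hx

lemma strictMonoOn_sinh_pow_three_sub_pow_three_mul_cosh :
    StrictMonoOn (fun x => sinh x ^ 3 - x ^ 3 * cosh x) (Ici 0) := by
  refine strictMonoOn_of_hasDerivWithinAt_pos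
    (f' := fun x => 3 * cosh x * (sinh x ^ 2 - x ^ 2) - x ^ 3 * sinh x) (convex_Ici 0)
    (by fun_prop) (fun y _ => ?_) (fun y hy => ?_)
  · exact ((((hasDerivAt_sinh y).pow 3).fun_sub
      ((hasDerivAt_pow 3 y).fun_mul (hasDerivAt_cosh y))).congr_deriv (by ring)).hasDerivWithinAt
  · rw [interior_Ici, mem_Ioi] at hy
    have hsinh := add_pow_three_div_six_le_sinh hy.le
    have hsq : y ^ 4 / 3 ≤ sinh y ^ 2 - y ^ 2 := by
      nlinarith [pow_le_pow_left₀ (by positivity) hsinh 2, pow_nonneg hy.le 6]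
    have htanh := mul_lt_mul_of_pos_left (sinh_lt_mul_cosh hy) (pow_pos hy 3)
    linarith [mul_le_mul_of_nonneg_left hsq (cosh_pos y).le]

end Real

/-- For all `r > 0`, `sinh³ r > r³ cosh r`. -/
theorem stmt3 (r : ℝ) (hr : 0 < r) :
    r ^ 3 * Real.cosh r < Real.sinh r ^ 3 := by
  simpa using Real.strictMonoOn_sinh_pow_three_sub_pow_three_mul_cosh self_mem_Ici hr.le hr
end

section
/- For every integer n ≥ 2 and every r > 0, ((n−1)/2)·((n−3)/2)·(1/sinh²r − 1/r²) + ((n−1)/2)² > 0. -/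
/-!
Write `a = (n - 1)/2`, `b = (n - 3)/2` and `f = 1/sinh²r - 1/r²`, so that the quantity is
`a (b f + a)` with `a > 0`. Since `r < sinh r ≤ r cosh r`, `f` lies in `[-1, 0]`. If `b ≤ 0`
then `b f ≥ 0`, and if `b ≥ 0` then `b f + a ≥ a - b = 1`; either way `b f + a > 0`.
-/

open Real

theorem Real.sinh_le_mul_cosh {x : ℝ} (hx : 0 ≤ x) : sinh x ≤ x * cosh x := by
  rcases hx.eq_or_lt with rfl | hx
  · simp
  obtain ⟨c, hc, hslope⟩ := exists_hasDerivAt_eq_slope sinh cosh hx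
    continuous_sinh.continuousOn fun y _ => hasDerivAt_sinh y
  rw [sinh_zero, sub_zero, sub_zero, eq_div_iff hx.ne'] at hslope
  rw [← hslope, mul_comm]
  gcongr
  exact cosh_le_cosh.2 (by rw [abs_of_pos hc.1, abs_of_pos hx]; exact hc.2.le)

theorem Real.neg_one_le_one_div_sinh_sq_sub_one_div_sq {r : ℝ} (hr : 0 < r) :
    -1 ≤ 1 / sinh r ^ 2 - 1 / r ^ 2 := by
  have hs : 0 < sinh r := sinh_pos_iff.2 hr
  have hsinh_sq : sinh r ^ 2 ≤ r ^ 2 * (1 + sinh r ^ 2) := by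
    rw [← cosh_sq', ← mul_pow]
    exact pow_le_pow_left₀ hs.le (sinh_le_mul_cosh hr.le) 2
  rw [div_sub_div _ _ (by positivity) (by positivity), le_div_iff₀ (by positivity)]
  linarith

theorem Real.one_div_sinh_sq_lt_one_div_sq {r : ℝ} (hr : 0 < r) :
    1 / sinh r ^ 2 < 1 / r ^ 2 := by
  gcongr
  exact self_lt_sinh_iff.2 hr

theorem potential_pos_of_mem_Icc {x f : ℝ} (hx : 1 < x) (hf : f ∈ Set.Icc (-1) 0) :
    0 < (x - 1) / 2 * ((x - 3) / 2) * f + ((x - 1) / 2) ^ 2 := by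
  have hbf : 0 < (x - 3) / 2 * f + (x - 1) / 2 := by
    rcases le_total x 3 with h3 | h3
    · have := mul_nonneg_of_nonpos_of_nonpos (by linarith : (x - 3) / 2 ≤ 0) hf.2
      linarith
    · have := mul_le_mul_of_nonneg_left hf.1 (by linarith : 0 ≤ (x - 3) / 2)
      linarith
  calc 0 < (x - 1) / 2 * ((x - 3) / 2 * f + (x - 1) / 2) := mul_pos (by linarith) hbf
    _ = _ := by ring

/-- For every integer `n ≥ 2` and every `r > 0`,
`((n−1)/2)·((n−3)/2)·(1/sinh²r − 1/r²) + ((n−1)/2)² > 0`. -/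
theorem stmt7 (n : ℕ) (hn : 2 ≤ n) (r : ℝ) (hr : 0 < r) :
    0 < ((n : ℝ) - 1) / 2 * (((n : ℝ) - 3) / 2) *
          (1 / Real.sinh r ^ 2 - 1 / r ^ 2) + (((n : ℝ) - 1) / 2) ^ 2 := by
  have hn' : (1 : ℝ) < n := by exact_mod_cast hn
  exact potential_pos_of_mem_Icc hn' ⟨neg_one_le_one_div_sinh_sq_sub_one_div_sq hr,
    sub_nonpos.2 (one_div_sinh_sq_lt_one_div_sq hr).le⟩
end
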